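/- There is no coupling of two continuous-time random walks X and Y on the two-point graph {0,1}, both started at 0, where X jumps across the single edge at rate 1 and Y jumps at rate 100, such that almost surely for all t ∈ [0,1], Y_t is at least as far from 0 as X_t (i.e., X_t = 1 implies Y_t = 1). -/
import Mathlib


open MeasureTheory

/-- Transition probability of the rate-`ρ` continuous-time walk on the two-point graph
`{0, 1}` (encoded as `Bool`, `false = 0`): `p_t(a, b) = (1 ± e^{-2ρt})/2`. -/
noncomputable def transP (ρ t : ℝ) (a b : Bool) : ℝ :=
  (1 + (if a = b then (1 : ℝ) else -1) * Real.exp (-2 * ρ * t)) / 2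

/-- `X` is (a version of) the rate-`ρ` continuous-time random walk on `{0, 1}` started at `0`:
all its finite-dimensional distributions are the Markov ones with kernel `transP ρ`. -/
def IsTelegraph {Ω : Type*} [MeasurableSpace Ω] (P : Measure Ω) (ρ : ℝ)
    (X : ℝ → Ω → Bool) : Prop :=
  ∀ (n : ℕ) (t : Fin (n + 1) → ℝ) (s : Fin (n + 1) → Bool),
    (∀ i, 0 ≤ t i) → StrictMono t →
    (P {ω | ∀ i, X (t i) ω = s i}).toReal =
      transP ρ (t 0) false (s 0) *
        ∏ i : Fin n, transP ρ (t i.succ - t i.castSucc) (s i.castSucc) (s i.succ)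

lemma exp_neg_one_lt : Real.exp (-1) < 0.4 := by
  have h := Real.exp_one_gt_d9
  have h1 : Real.exp (-1) * Real.exp 1 = 1 := by
    rw [← Real.exp_add]; norm_num
  have h2 := Real.exp_pos (-1 : ℝ)
  nlinarith

lemma exp_neg_half_gt : (0.6 : ℝ) < Real.exp (-(1/2)) := by
  have hsq : Real.exp (1/2) * Real.exp (1/2) = Real.exp 1 := by
    rw [← Real.exp_add]; norm_num
  have h := Real.exp_one_lt_d9
  have hp := Real.exp_pos (1/2 : ℝ)
  have hlt : Real.exp (1/2) < 5/3 := by nlinarith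
  have h1 : Real.exp (-(1/2)) * Real.exp (1/2) = 1 := by
    rw [← Real.exp_add]; norm_num
  have h2 := Real.exp_pos (-(1/2) : ℝ)
  nlinarith

lemma cosh_bound : Real.exp (-(1/200)) ≤ (1 + Real.exp (-(1/100))) / 2 := by
  have hsq : Real.exp (-(1/200)) * Real.exp (-(1/200)) = Real.exp (-(1/100)) := by
    rw [← Real.exp_add]; norm_num
  nlinarith [sq_nonneg (1 - Real.exp (-(1/200)))]

/-- There is no coupling of the rate-`1` and rate-`100` continuous-time
random walks on the two-point graph, both started at `0`, such that almost surely, for all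
`t ∈ [0, 1]`, the rate-`100` walk is at least as far from `0` as the rate-`1` walk. -/
theorem stmt_17 :
    ¬ ∃ (Ω : Type) (_ : MeasurableSpace Ω) (P : Measure Ω) (_ : IsProbabilityMeasure P)
        (X Y : ℝ → Ω → Bool),
      IsTelegraph P 1 X ∧ IsTelegraph P 100 Y ∧
      (∀ᵐ ω ∂P, ∀ t ∈ Set.Icc (0 : ℝ) 1, X t ω = true → Y t ω = true) := by
  rintro ⟨Ω, mΩ, P, hP, X, Y, hX, hY, hdom⟩
  set t : Fin 101 → ℝ := fun i => 1/2 + (i : ℕ)/200 with ht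
  have ht0 : ∀ i, (0:ℝ) ≤ t i := by
    intro i; simp only [ht]; positivity
  have htmono : StrictMono t := by
    intro i j hij
    simp only [ht]
    have : ((i:ℕ):ℝ) < ((j:ℕ):ℝ) := by exact_mod_cast hij
    linarith
  have hti : ∀ i, t i ∈ Set.Icc (0:ℝ) 1 := by
    intro i
    refine ⟨ht0 i, ?_⟩
    have hi : (i : ℕ) ≤ 100 := Nat.lt_succ_iff.mp i.isLt
    have : ((i:ℕ):ℝ) ≤ 100 := by exact_mod_cast hi
    simp only [ht]
    linarith
  have hXeq := hX 100 t (fun _ => true) ht0 htmono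
  have hYeq := hY 100 t (fun _ => true) ht0 htmono
  have hgap : ∀ i : Fin 100, t i.succ - t i.castSucc = 1/200 := by
    intro i
    simp only [ht, Fin.val_succ, Fin.coe_castSucc]
    push_cast; ring
  have ht0' : t 0 = 1/2 := by simp [ht]
  -- compute the X probability
  have hXP : transP 1 (1/2) false true = (1 - Real.exp (-1)) / 2 := by
    unfold transP; norm_num; ring
  have hXg : transP 1 (1/200) true true = (1 + Real.exp (-(1/100))) / 2 := by
    unfold transP; norm_num
  have hYP : transP 100 (1/2) false true = (1 - Real.exp (-100)) / 2 := by
    unfold transP; norm_num; ring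
  have hYg : transP 100 (1/200) true true = (1 + Real.exp (-1)) / 2 := by
    unfold transP; norm_num
  have hA : (P {ω | ∀ i, X (t i) ω = true}).toReal =
      (1 - Real.exp (-1)) / 2 * ((1 + Real.exp (-(1/100))) / 2) ^ 100 := by
    rw [hXeq]
    simp only [hgap, ht0', hXP, hXg, Finset.prod_const, Finset.card_univ, Fintype.card_fin]
  have hB : (P {ω | ∀ i, Y (t i) ω = true}).toReal =
      (1 - Real.exp (-100)) / 2 * ((1 + Real.exp (-1)) / 2) ^ 100 := by
    rw [hYeq]
    simp only [hgap, ht0', hYP, hYg, Finset.prod_const, Finset.card_univ, Fintype.card_fin]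
  -- domination gives P S ≤ P T
  have hsub : {ω | ∀ i, X (t i) ω = true} ⊆
      {ω | ∀ i, Y (t i) ω = true} ∪
      {ω | ¬ ∀ s ∈ Set.Icc (0:ℝ) 1, X s ω = true → Y s ω = true} := by
    intro ω hω
    by_cases h : ∀ s ∈ Set.Icc (0:ℝ) 1, X s ω = true → Y s ω = true
    · exact Or.inl fun i => h (t i) (hti i) (hω i)
    · exact Or.inr h
  have hnull : P {ω | ¬ ∀ s ∈ Set.Icc (0:ℝ) 1, X s ω = true → Y s ω = true} = 0 :=
    ae_iff.mp hdom
  have hle : P {ω | ∀ i, X (t i) ω = true} ≤ P {ω | ∀ i, Y (t i) ω = true} := by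
    calc P {ω | ∀ i, X (t i) ω = true}
        ≤ P ({ω | ∀ i, Y (t i) ω = true} ∪
            {ω | ¬ ∀ s ∈ Set.Icc (0:ℝ) 1, X s ω = true → Y s ω = true}) :=
          measure_mono hsub
      _ ≤ P {ω | ∀ i, Y (t i) ω = true} +
            P {ω | ¬ ∀ s ∈ Set.Icc (0:ℝ) 1, X s ω = true → Y s ω = true} :=
          measure_union_le _ _
      _ = P {ω | ∀ i, Y (t i) ω = true} := by rw [hnull, add_zero]
  have hlet : (P {ω | ∀ i, X (t i) ω = true}).toReal ≤
      (P {ω | ∀ i, Y (t i) ω = true}).toReal :=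
    ENNReal.toReal_mono (measure_ne_top P _) hle
  rw [hA, hB] at hlet
  -- numeric contradiction
  have e1 := exp_neg_one_lt
  have e2 := exp_neg_half_gt
  have e3 := cosh_bound
  have hq : Real.exp (-(1/2)) ≤ ((1 + Real.exp (-(1/100))) / 2) ^ 100 := by
    have := pow_le_pow_left₀ (le_of_lt (Real.exp_pos _)) e3 100
    calc Real.exp (-(1/2)) = Real.exp (-(1/200)) ^ 100 := by
          rw [← Real.exp_nat_mul]; norm_num
      _ ≤ ((1 + Real.exp (-(1/100))) / 2) ^ 100 := this
  have hApos : (0.18 : ℝ) < (1 - Real.exp (-1)) / 2 * ((1 + Real.exp (-(1/100))) / 2) ^ 100 := by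
    have hc : (0.3 : ℝ) < (1 - Real.exp (-1)) / 2 := by linarith
    have hq2 : (0.6 : ℝ) < ((1 + Real.exp (-(1/100))) / 2) ^ 100 := lt_of_lt_of_le e2 hq
    calc (0.18 : ℝ) = 0.3 * 0.6 := by norm_num
      _ < (1 - Real.exp (-1)) / 2 * ((1 + Real.exp (-(1/100))) / 2) ^ 100 :=
          mul_lt_mul'' hc hq2 (by norm_num) (by norm_num)
  have hpB : ((1 + Real.exp (-1)) / 2) ^ 100 ≤ (0.7:ℝ) ^ 100 := by
    apply pow_le_pow_left₀ (by positivity) (by linarith)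
  have h07 : (0.7:ℝ) ^ 100 < 0.36 := by norm_num
  have hBsmall : (1 - Real.exp (-100)) / 2 * ((1 + Real.exp (-1)) / 2) ^ 100 < 0.18 := by
    have hc1 : (0:ℝ) < Real.exp (-100) := Real.exp_pos _
    have hc2 : Real.exp (-100) < 1 := by
      rw [Real.exp_lt_one_iff]; norm_num
    have hp0 : (0:ℝ) ≤ ((1 + Real.exp (-1)) / 2) ^ 100 := by positivity
    have hmul : (1 - Real.exp (-100)) / 2 * ((1 + Real.exp (-1)) / 2) ^ 100 ≤
        (1/2 : ℝ) * (0.7:ℝ) ^ 100 :=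
      mul_le_mul (by linarith) hpB hp0 (by norm_num)
    linarith
  linarith
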